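/- Let G be a DAG with topological ordering ord, and let u, v be vertices with ord(v) < ord(u) and no directed path from v to u in G. Then the number of pairs (w, (y,z)) where w is a vertex with w ⇝ u in G and (y,z) is an edge of G with v ⇝ y and ord(y) < ord(w), is at most the number of pairs (w', (c,d)) of a vertex w' and an edge (c,d) of G such that w' ⇝ c holds in G+(u,v) but w' ⇝ c does not hold in G. -/

import Mathlib

/-- Reachability: a directed path (possibly of length 0) from `x` to `y`. -/
def Reach {V : Type*} (E : V → V → Prop) : V → V → Prop :=
  Relation.ReflTransGen E

/-- A digraph is acyclic if it has no directed cycle. -/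
def Acyclic {V : Type*} (E : V → V → Prop) : Prop :=
  ∀ x, ¬ Relation.TransGen E x x

/-- `ord` is a topological ordering of the digraph `E`. -/
def IsTopOrd {V : Type*} {n : ℕ} (E : V → V → Prop) (ord : V ≃ Fin n) : Prop :=
  ∀ a b, E a b → ord a < ord b

/-- The graph `G + (u,v)`: the edge `(u,v)` is added to `E`. -/
def AddEdge {V : Type*} (E : V → V → Prop) (u v : V) : V → V → Prop :=
  fun a b => E a b ∨ (a = u ∧ b = v)

/-- `A = {x : ord v ≤ ord x ≤ ord u and x ⇝ u}`. -/
def AncS {V : Type*} {n : ℕ} (E : V → V → Prop) (ord : V ≃ Fin n) (u v : V) : Set V :=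
  {x | ord v ≤ ord x ∧ ord x ≤ ord u ∧ Reach E x u}

/-- `D = {x : ord v ≤ ord x ≤ ord u and v ⇝ x}`. -/
def DesS {V : Type*} {n : ℕ} (E : V → V → Prop) (ord : V ≃ Fin n) (u v : V) : Set V :=
  {x | ord v ≤ ord x ∧ ord x ≤ ord u ∧ Reach E v x}

/-- `ord'` is a canonical reordering for `ord, u, v`: conditions (a)-(d). -/
def IsCanonical {V : Type*} {n : ℕ} (E : V → V → Prop) (ord ord' : V ≃ Fin n)
    (u v : V) : Prop :=
  (∀ x, x ∉ AncS E ord u v ∪ DesS E ord u v → ord' x = ord x) ∧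
  (⇑ord' '' (AncS E ord u v ∪ DesS E ord u v) =
    ⇑ord '' (AncS E ord u v ∪ DesS E ord u v)) ∧
  (∀ x y, (x ∈ AncS E ord u v ∧ y ∈ AncS E ord u v) ∨
          (x ∈ DesS E ord u v ∧ y ∈ DesS E ord u v) →
      (ord' x < ord' y ↔ ord x < ord y)) ∧
  (∀ x ∈ AncS E ord u v, ∀ y ∈ DesS E ord u v, ord' x < ord' y)

/-!
Every counted pair is itself newly related: in `G + (u,v)` the path `w ⇝ u → v ⇝ y` exists,
while a path `w ⇝ y` in `G` would force `ord w ≤ ord y`.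
-/

theorem IsTopOrd.le_of_reach {V : Type*} {n : ℕ} {E : V → V → Prop} {ord : V ≃ Fin n}
    (htop : IsTopOrd E ord) {x y : V} (h : Reach E x y) : ord x ≤ ord y := by
  induction h with
  | refl => exact le_rfl
  | tail _ hab ih => exact ih.trans (htop _ _ hab).le

theorem Reach.addEdge {V : Type*} {E : V → V → Prop} {x y : V} (u v : V)
    (h : Reach E x y) : Reach (AddEdge E u v) x y :=
  Relation.ReflTransGen.mono (fun _ _ => Or.inl) x y h

theorem reach_addEdge_of_reach_of_reach {V : Type*} {E : V → V → Prop} {x y u v : V}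
    (hxu : Reach E x u) (hvy : Reach E v y) : Reach (AddEdge E u v) x y :=
  ((hxu.addEdge u v).tail (Or.inr ⟨rfl, rfl⟩)).trans (hvy.addEdge u v)

theorem count_newly_related_vertex_edge_pairs_general {V : Type*} [Fintype V] {n : ℕ}
    (E : V → V → Prop)
    (ord : V ≃ Fin n) (htop : IsTopOrd E ord)
    (u v : V) :
    {q : V × (V × V) | Reach E q.1 u ∧ E q.2.1 q.2.2 ∧ Reach E v q.2.1 ∧
        ord q.2.1 < ord q.1}.ncard ≤
    {q : V × (V × V) | E q.2.1 q.2.2 ∧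
        Reach (AddEdge E u v) q.1 q.2.1 ∧ ¬ Reach E q.1 q.2.1}.ncard := by
  refine Set.ncard_le_ncard ?_ (Set.toFinite _)
  rintro ⟨w, y, z⟩ ⟨hwu, hyz, hvy, hyw⟩
  exact ⟨hyz, reach_addEdge_of_reach_of_reach hwu hvy,
    fun hwy => (htop.le_of_reach hwy).not_gt hyw⟩

/-- the number of pairs (ancestor `w` of `u`, edge `(y,z)` out of a
descendant of `v`) with `ord y < ord w` is at most the number of
(vertex, edge-of-`G`) pairs that become related for the first time upon
inserting `(u,v)`. -/
theorem count_newly_related_vertex_edge_pairs {V : Type*} [Fintype V] {n : ℕ}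
    (E : V → V → Prop) (hacyc : Acyclic E)
    (ord : V ≃ Fin n) (htop : IsTopOrd E ord)
    (u v : V) (huv : ord v < ord u) (hnr : ¬ Reach E v u) :
    {q : V × (V × V) | Reach E q.1 u ∧ E q.2.1 q.2.2 ∧ Reach E v q.2.1 ∧
        ord q.2.1 < ord q.1}.ncard ≤
    {q : V × (V × V) | E q.2.1 q.2.2 ∧
        Reach (AddEdge E u v) q.1 q.2.1 ∧ ¬ Reach E q.1 q.2.1}.ncard :=
  count_newly_related_vertex_edge_pairs_general E ord htop u v
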